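/- Let k ≥ 1 be an integer and let H ⊆ ℤ^k ∖ {0}. If δ(H) = 0, then H is a Heilbronn set; that is, for every ξ ∈ ℝ^k and every ε > 0 there exists h ∈ H with ‖h·ξ‖ < ε. -/

import Mathlib

/-!
If `‖h·ξ‖ ≥ e` for every `h ∈ H`, average a nonnegative trigonometric polynomial `T` along
`n ξ` against the weights `w n = sin² (π n e) / (π n)²`, the Fourier coefficients of the
triangle `x ↦ max (0, e - ‖x‖)`. Since `∑ₙ w n cos (2π n λ)` equals `(e - e²) / 2` at `λ = 0`
and `-e² / 2` once `‖λ‖ ≥ e`, the average is `(a₀ e - e²) / 2 ≥ 0`, so `a₀ ≥ e` and `δ(H) ≥ e`.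
-/

/-- Distance from a real number to the nearest integer. -/
noncomputable def nearestIntDist (x : ℝ) : ℝ := |x - round x|

open Real Set

lemma hasSum_cos_div_sq_of_mem_Icc {x : ℝ} (hx : x ∈ Icc (0 : ℝ) 1) :
    HasSum (fun n : ℕ => cos (2 * π * n * x) / (n : ℝ) ^ 2) (π ^ 2 * bernoulliFun 2 x) := by
  convert hasSum_one_div_nat_pow_mul_cos one_ne_zero hx using 1
  · ext n
    simp only [mul_one, one_div, inv_mul_eq_div]
  · change _ = _ * bernoulliFun (2 * 1) x
    rw [mul_one, Nat.factorial_two]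
    push_cast
    ring

lemma hasSum_cos_div_sq (x : ℝ) :
    HasSum (fun n : ℕ => cos (2 * π * n * x) / (n : ℝ) ^ 2)
      (π ^ 2 * bernoulliFun 2 (Int.fract x)) := by
  convert hasSum_cos_div_sq_of_mem_Icc ⟨Int.fract_nonneg x, (Int.fract_lt_one x).le⟩
    using 3 with n
  rw [show 2 * π * n * x = 2 * π * n * Int.fract x + ((n * ⌊x⌋ : ℤ) : ℝ) * (2 * π) by
      push_cast; linear_combination (2 * π * n) * (Int.fract_add_floor x).symm,
    cos_add_int_mul_two_pi]

lemma bernoulliFun_two_fract_add_intCast {y : ℝ} (hy : y ∈ Icc (0 : ℝ) 1) (m : ℤ) :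
    bernoulliFun 2 (Int.fract (y + m)) = bernoulliFun 2 y := by
  rw [Int.fract_add_intCast]
  rcases hy.2.lt_or_eq with hy1 | rfl
  · rw [Int.fract_eq_self.mpr ⟨hy.1, hy1⟩]
  · simp

noncomputable def triangleWeight (e : ℝ) (n : ℕ) : ℝ := sin (π * n * e) ^ 2 / (π * n) ^ 2

lemma triangleWeight_nonneg (e : ℝ) (n : ℕ) : 0 ≤ triangleWeight e n := by
  unfold triangleWeight
  positivity

lemma hasSum_triangleWeight_mul_cos (e l : ℝ) :
    HasSum (fun n : ℕ => triangleWeight e n * cos (2 * π * n * l))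
      ((2 * bernoulliFun 2 (Int.fract l) - bernoulliFun 2 (Int.fract (l + e))
        - bernoulliFun 2 (Int.fract (l - e))) / 4) := by
  have h := (((hasSum_cos_div_sq l).mul_left (2 * π⁻¹ ^ 2)).sub
    ((hasSum_cos_div_sq (l + e)).mul_left (π⁻¹ ^ 2))).sub
    ((hasSum_cos_div_sq (l - e)).mul_left (π⁻¹ ^ 2))
  convert h.div_const 4 using 1
  · rfl
  · ext n
    rcases eq_or_ne (n : ℝ) 0 with hn | hn
    · simp [triangleWeight, hn]
    -- `sin² (π n e) cos (2π n l) = (2 cos (2π n l) - cos (2π n (l + e)) - cos (2π n (l - e))) / 4`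
    have hsin : sin (π * n * e) ^ 2 = 1 / 2 - cos (2 * π * n * e) / 2 := by
      rw [sin_sq_eq_half_sub]; ring_nf
    rw [triangleWeight, hsin, show 2 * π * n * (l + e) = 2 * π * n * l + 2 * π * n * e by ring,
      show 2 * π * n * (l - e) = 2 * π * n * l - 2 * π * n * e by ring, cos_add, cos_sub]
    field_simp
    ring
  · field_simp

lemma hasSum_triangleWeight {e : ℝ} (he0 : 0 < e) (he1 : e < 1) :
    HasSum (triangleWeight e) ((e - e ^ 2) / 2) := by
  have h := hasSum_triangleWeight_mul_cos e 0
  have hfe : Int.fract e = e := Int.fract_eq_self.mpr ⟨he0.le, he1⟩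
  have hneg : bernoulliFun 2 (Int.fract (0 - e)) = bernoulliFun 2 (1 - e) := by
    rw [show (0 : ℝ) - e = (1 - e) + ((-1 : ℤ) : ℝ) by push_cast; ring]
    exact bernoulliFun_two_fract_add_intCast ⟨by linarith, by linarith⟩ _
  simp only [mul_zero, cos_zero, mul_one, Int.fract_zero, zero_add, hfe, hneg,
    bernoulliFun_two] at h
  convert h using 1
  ring

lemma hasSum_triangleWeight_mul_cos_of_le_fract {e l : ℝ} (he : 0 ≤ e)
    (hl₁ : e ≤ Int.fract l) (hl₂ : Int.fract l ≤ 1 - e) :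
    HasSum (fun n : ℕ => triangleWeight e n * cos (2 * π * n * l)) (-e ^ 2 / 2) := by
  have h := hasSum_triangleWeight_mul_cos e l
  have hadd : bernoulliFun 2 (Int.fract (l + e)) = bernoulliFun 2 (Int.fract l + e) := by
    rw [show l + e = Int.fract l + e + ⌊l⌋ by linarith [Int.fract_add_floor l],
      bernoulliFun_two_fract_add_intCast ⟨by linarith, by linarith⟩]
  have hsub : bernoulliFun 2 (Int.fract (l - e)) = bernoulliFun 2 (Int.fract l - e) := by
    rw [show l - e = Int.fract l - e + ⌊l⌋ by linarith [Int.fract_add_floor l],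
      bernoulliFun_two_fract_add_intCast ⟨by linarith, by linarith⟩]
  simp only [hadd, hsub, bernoulliFun_two] at h
  convert h using 1
  ring

lemma le_fract_and_fract_le_of_le_nearestIntDist {e x : ℝ} (h : e ≤ nearestIntDist x) :
    e ≤ Int.fract x ∧ Int.fract x ≤ 1 - e := by
  rw [nearestIntDist, abs_sub_round_eq_min, le_min_iff] at h
  exact ⟨h.1, by linarith [h.2]⟩

theorem le_constTerm_of_le_nearestIntDist {ι : Type*} (s : Finset ι) (a₀ : ℝ) (a θ : ι → ℝ)
    {e : ℝ} (he0 : 0 < e) (he1 : e < 1)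
    (hT : ∀ n : ℕ, 0 ≤ a₀ + ∑ i ∈ s, a i * cos (2 * π * n * θ i))
    (hT0 : a₀ + ∑ i ∈ s, a i = 1) (hθ : ∀ i ∈ s, e ≤ nearestIntDist (θ i)) :
    e ≤ a₀ := by
  have hterm : ∀ i ∈ s, HasSum (fun n : ℕ => a i * (triangleWeight e n * cos (2 * π * n * θ i)))
      (a i * (-e ^ 2 / 2)) := fun i hi =>
    have hfr := le_fract_and_fract_le_of_le_nearestIntDist (hθ i hi)
    (hasSum_triangleWeight_mul_cos_of_le_fract he0.le hfr.1 hfr.2).mul_left (a i)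
  have hsum : HasSum
      (fun n : ℕ => triangleWeight e n * (a₀ + ∑ i ∈ s, a i * cos (2 * π * n * θ i)))
      (a₀ * ((e - e ^ 2) / 2) + (1 - a₀) * (-e ^ 2 / 2)) := by
    have hfun :
        (fun n : ℕ => triangleWeight e n * (a₀ + ∑ i ∈ s, a i * cos (2 * π * n * θ i))) =
          fun n => a₀ * triangleWeight e n +
            ∑ i ∈ s, a i * (triangleWeight e n * cos (2 * π * n * θ i)) := by
      ext n
      rw [mul_add, mul_comm, Finset.mul_sum]
      exact congrArg _ (Finset.sum_congr rfl fun i _ => by ring)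
    rw [hfun, ← hT0, add_sub_cancel_left, Finset.sum_mul]
    exact ((hasSum_triangleWeight he0 he1).mul_left a₀).add (hasSum_sum hterm)
  have hnonneg := hasSum_le (fun n => mul_nonneg (triangleWeight_nonneg e n) (hT n))
    hasSum_zero hsum
  nlinarith

theorem stmt_1_general (k : ℕ) (H : Set (Fin k → ℤ))
    (hδ : sInf {a₀ : ℝ | ∃ (H' : Finset (Fin k → ℤ)) (a : (Fin k → ℤ) → ℝ),
        ↑H' ⊆ H ∧
        (∀ x : Fin k → ℝ,
          0 ≤ a₀ + ∑ h ∈ H', a h * Real.cos (2 * Real.pi * ∑ i, (h i : ℝ) * x i)) ∧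
        a₀ + ∑ h ∈ H', a h = 1} = 0) :
    ∀ ξ : Fin k → ℝ, ∀ ε : ℝ, 0 < ε →
      ∃ h ∈ H, nearestIntDist (∑ i, (h i : ℝ) * ξ i) < ε := by
  intro ξ ε hε
  by_contra! hfar
  have he0 : 0 < min ε (1 / 2) := lt_min hε one_half_pos
  refine (he0.trans_le (hδ ▸ le_csInf ⟨1, ∅, 0, by simp, by simp, by simp⟩ ?_)).false
  rintro a₀ ⟨H', a, hH', hT, hT0⟩
  refine le_constTerm_of_le_nearestIntDist H' a₀ a (fun h => ∑ i, (h i : ℝ) * ξ i) he0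
    ((min_le_right _ _).trans_lt one_half_lt_one) (fun n => ?_) hT0
    (fun h hh => (min_le_left _ _).trans (hfar h (hH' hh)))
  convert hT (fun i => n * ξ i) using 4 with h
  congr 1
  rw [Finset.mul_sum, Finset.mul_sum]
  exact Finset.sum_congr rfl fun i _ => by ring

/-- Let `k ≥ 1` and `H ⊆ ℤ^k ∖ {0}`. If `δ(H) = 0`, then `H` is a
Heilbronn set: for every `ξ ∈ ℝ^k` and every `ε > 0` there exists `h ∈ H` with
`‖h·ξ‖ < ε`. Here `δ(H)` is the infimum of constant terms `a₀` of nonnegative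
trigonometric polynomials `T(x) = a₀ + Σ_{h ∈ H'} a_h cos(2π h·x)` (with `H'` a
finite subset of `H`) normalized by `T(0) = 1`. -/
theorem stmt_1 (k : ℕ) (hk : 1 ≤ k) (H : Set (Fin k → ℤ))
    (hH : (0 : Fin k → ℤ) ∉ H)
    (hδ : sInf {a₀ : ℝ | ∃ (H' : Finset (Fin k → ℤ)) (a : (Fin k → ℤ) → ℝ),
        ↑H' ⊆ H ∧
        (∀ x : Fin k → ℝ,
          0 ≤ a₀ + ∑ h ∈ H', a h * Real.cos (2 * Real.pi * ∑ i, (h i : ℝ) * x i)) ∧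
        a₀ + ∑ h ∈ H', a h = 1} = 0) :
    ∀ ξ : Fin k → ℝ, ∀ ε : ℝ, 0 < ε →
      ∃ h ∈ H, nearestIntDist (∑ i, (h i : ℝ) * ξ i) < ε :=
  stmt_1_general k H hδ
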